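/- arXiv:2408.16381 — 2 statements merged into one kernel-verified Lean document; each statement's English description precedes it below -/
import Mathlib

section
/- The class of functions F₂ = { (l,u) ↦ 1{l ≤ t < u}·(t−l) : t ∈ ℝ } on ℝ² is a VC-subgraph class with VC index at most 3; equivalently, the collection of subgraph sets { (l,u,c) : 1{l ≤ t < u}·(t−l) > c } cannot shatter any three points of ℝ³. -/
/-- The function `f_t(l,u) = 1{l ≤ t < u}·(t − l)`. -/
noncomputable def fFun (t l u : ℝ) : ℝ := if l ≤ t ∧ t < u then t - l else 0

/-- Order-convexity: the set of `t` with `fFun t l u > c` is an interval. -/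
lemma fFun_convex (l u c s t r : ℝ) (hst : s ≤ t) (htr : t ≤ r)
    (hs : fFun s l u > c) (hr : fFun r l u > c) : fFun t l u > c := by
  unfold fFun at *
  by_cases hc : c < 0
  · split_ifs with h
    · linarith [h.1]
    · exact hc
  · push_neg at hc
    split_ifs at hs with h1
    · split_ifs at hr with h2
      · have : l ≤ t ∧ t < u := ⟨le_trans h1.1 hst, lt_of_le_of_lt htr h2.2⟩
        rw [if_pos this]; linarith
      · linarith
    · linarith

/-- the subgraph sets `{(l,u,c) : f_t(l,u) > c}` of the class
`F₂ = {f_t : t ∈ ℝ}` cannot shatter any three points of `ℝ³`; i.e. the class is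
VC-subgraph with VC index at most 3. -/
theorem fFun_subgraphs_not_shatter_three (p₁ p₂ p₃ : ℝ × ℝ × ℝ)
    (hdist : p₁ ≠ p₂ ∧ p₁ ≠ p₃ ∧ p₂ ≠ p₃) :
    ¬ (∀ S ⊆ ({p₁, p₂, p₃} : Set (ℝ × ℝ × ℝ)), ∃ t : ℝ,
        ({p₁, p₂, p₃} : Set (ℝ × ℝ × ℝ)) ∩ {p | fFun t p.1 p.2.1 > p.2.2} = S) := by
  obtain ⟨h12, h13, h23⟩ := hdist
  intro h
  -- witnesses for the patterns {p₁,p₂}, {p₂,p₃}, {p₁,p₃}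
  obtain ⟨b, hb⟩ := h {p₁, p₂} (by intro x hx; simp at hx ⊢; tauto)
  obtain ⟨d, hd⟩ := h {p₂, p₃} (by intro x hx; simp at hx ⊢; tauto)
  obtain ⟨e, he⟩ := h {p₁, p₃} (by intro x hx; simp at hx ⊢; tauto)
  have mem_of : ∀ (t : ℝ) (S : Set (ℝ × ℝ × ℝ)) (p : ℝ × ℝ × ℝ),
      ({p₁, p₂, p₃} : Set (ℝ × ℝ × ℝ)) ∩ {q | fFun t q.1 q.2.1 > q.2.2} = S →
      p ∈ ({p₁, p₂, p₃} : Set (ℝ × ℝ × ℝ)) → p ∈ S → fFun t p.1 p.2.1 > p.2.2 := by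
    intro t S p hS hp hpS
    rw [← hS] at hpS
    exact hpS.2
  have nmem_of : ∀ (t : ℝ) (S : Set (ℝ × ℝ × ℝ)) (p : ℝ × ℝ × ℝ),
      ({p₁, p₂, p₃} : Set (ℝ × ℝ × ℝ)) ∩ {q | fFun t q.1 q.2.1 > q.2.2} = S →
      p ∈ ({p₁, p₂, p₃} : Set (ℝ × ℝ × ℝ)) → p ∉ S → ¬ fFun t p.1 p.2.1 > p.2.2 := by
    intro t S p hS hp hpS hmem
    exact hpS (hS ▸ Set.mem_inter hp hmem)
  have g1b : fFun b p₁.1 p₁.2.1 > p₁.2.2 := mem_of b _ p₁ hb (by simp) (by simp)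
  have g2b : fFun b p₂.1 p₂.2.1 > p₂.2.2 := mem_of b _ p₂ hb (by simp) (by simp)
  have g3b : ¬ fFun b p₃.1 p₃.2.1 > p₃.2.2 :=
    nmem_of b _ p₃ hb (by simp) (by simp [h13.symm, h23.symm])
  have g2d : fFun d p₂.1 p₂.2.1 > p₂.2.2 := mem_of d _ p₂ hd (by simp) (by simp)
  have g3d : fFun d p₃.1 p₃.2.1 > p₃.2.2 := mem_of d _ p₃ hd (by simp) (by simp)
  have g1d : ¬ fFun d p₁.1 p₁.2.1 > p₁.2.2 :=
    nmem_of d _ p₁ hd (by simp) (by simp [h12, h13])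
  have g1e : fFun e p₁.1 p₁.2.1 > p₁.2.2 := mem_of e _ p₁ he (by simp) (by simp)
  have g3e : fFun e p₃.1 p₃.2.1 > p₃.2.2 := mem_of e _ p₃ he (by simp) (by simp)
  have g2e : ¬ fFun e p₂.1 p₂.2.1 > p₂.2.2 :=
    nmem_of e _ p₂ he (by simp) (by simp [h12.symm, h23])
  -- the middle of b, d, e yields a contradiction by convexity
  rcases le_total b d with hbd | hdb
  · rcases le_total d e with hde | hed
    · exact g1d (fFun_convex _ _ _ _ _ _ hbd hde g1b g1e)
    · rcases le_total b e with hbe | heb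
      · exact g2e (fFun_convex _ _ _ _ _ _ hbe hed g2b g2d)
      · exact g3b (fFun_convex _ _ _ _ _ _ heb hbd g3e g3d)
  · rcases le_total b e with hbe | heb
    · exact g3b (fFun_convex _ _ _ _ _ _ hdb hbe g3d g3e)
    · rcases le_total d e with hde | hed
      · exact g2e (fFun_convex _ _ _ _ _ _ hde heb g2d g2b)
      · exact g1d (fFun_convex _ _ _ _ _ _ hed hdb g1e g1b)
end

section
/- Let K, K̂, K̃ be cdf-like functions with K W-Lipschitz, where K̂(v) = (1/n)Σᵢ 1{|F̂(Tᵢ,Xᵢ) − b| < v} and K̃(v) = (1/n)Σᵢ 1{|F(Tᵢ,Xᵢ) − b| < v}. Then for any δ > 0, sup_v |K̂(v) − K(v)| ≤ 2·(sup_{t≤τ,x} |F̂(t,x) − F(t,x)|)²/δ² + 2δW + 3·sup_v |K̃(v) − K(v)| almost surely. -/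
/-- oracle-vs-estimated empirical score cdf bound. If `K` is the
`W`-Lipschitz cdf of the oracle scores, `K̂` and `K̃` are the empirical cdfs of
estimated and oracle scores, `|F̂ − F| ≤ ε` uniformly on `{t ≤ τ} × ℝᵖ`, and
`|K̃ − K| ≤ M` uniformly, then for any `δ > 0`,
`sup_v |K̂(v) − K(v)| ≤ 2ε²/δ² + 2δW + 3M`. -/
theorem empirical_score_cdf_bound (p n : ℕ) (τ b ε W M δ : ℝ)
    (hτ : 0 < τ) (hb : b ∈ Set.Icc (0:ℝ) 1) (hδ : 0 < δ) (hW : 0 ≤ W)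
    (Fhat F : ℝ → (Fin p → ℝ) → ℝ) (K : ℝ → ℝ)
    (hK : ∀ v₁ v₂ : ℝ, |K v₁ - K v₂| ≤ W * |v₁ - v₂|)
    (T : Fin n → ℝ) (X : Fin n → Fin p → ℝ) (hT : ∀ i, T i ≤ τ)
    (hε : ∀ (t : ℝ) (x : Fin p → ℝ), t ≤ τ → |Fhat t x - F t x| ≤ ε)
    (hM : ∀ v : ℝ,
      |(n : ℝ)⁻¹ * (∑ i : Fin n, if |F (T i) (X i) - b| < v then (1:ℝ) else 0) - K v| ≤ M) :
    ∀ v : ℝ,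
      |(n : ℝ)⁻¹ * (∑ i : Fin n, if |Fhat (T i) (X i) - b| < v then (1:ℝ) else 0) - K v| ≤
        2 * ε ^ 2 / δ ^ 2 + 2 * δ * W + 3 * M := by
  intro v
  have hεnn : 0 ≤ ε := (abs_nonneg _).trans (hε τ (fun _ => 0) le_rfl)
  have hM0 : 0 ≤ M := (abs_nonneg _).trans (hM 0)
  have hdiv : 0 ≤ 2 * ε ^ 2 / δ ^ 2 := by positivity
  set Sh : ℝ := (n : ℝ)⁻¹ * (∑ i : Fin n, if |Fhat (T i) (X i) - b| < v then (1:ℝ) else 0)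
    with hShdef
  have hninv : (0:ℝ) ≤ (n:ℝ)⁻¹ := by positivity
  rcases le_or_gt ε δ with hle | hlt
  · -- sandwich case
    have h1 : Sh ≤ (n : ℝ)⁻¹ * (∑ i : Fin n,
        if |F (T i) (X i) - b| < v + δ then (1:ℝ) else 0) := by
      apply mul_le_mul_of_nonneg_left _ hninv
      apply Finset.sum_le_sum
      intro i _
      have hFe : |Fhat (T i) (X i) - F (T i) (X i)| ≤ ε := hε _ _ (hT i)
      split_ifs with ha hb'
      · exact le_refl _
      · exfalso
        apply hb'
        have h3 : |F (T i) (X i) - b| ≤ |F (T i) (X i) - Fhat (T i) (X i)|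
            + |Fhat (T i) (X i) - b| := abs_sub_le _ _ _
        rw [abs_sub_comm (F (T i) (X i)) (Fhat (T i) (X i))] at h3
        linarith
      · norm_num
      · exact le_refl _
    have h2 : (n : ℝ)⁻¹ * (∑ i : Fin n,
        if |F (T i) (X i) - b| < v - δ then (1:ℝ) else 0) ≤ Sh := by
      apply mul_le_mul_of_nonneg_left _ hninv
      apply Finset.sum_le_sum
      intro i _
      have hFe : |Fhat (T i) (X i) - F (T i) (X i)| ≤ ε := hε _ _ (hT i)
      split_ifs with ha hb'
      · exact le_refl _
      · exfalso
        apply hb'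
        have h3 : |Fhat (T i) (X i) - b| ≤ |Fhat (T i) (X i) - F (T i) (X i)|
            + |F (T i) (X i) - b| := abs_sub_le _ _ _
        linarith
      · norm_num
      · exact le_refl _
    have hMp := hM (v + δ)
    have hMm := hM (v - δ)
    have hKp := hK (v + δ) v
    have hKm := hK v (v - δ)
    rw [show v + δ - v = δ by ring, abs_of_pos hδ] at hKp
    rw [show v - (v - δ) = δ by ring, abs_of_pos hδ] at hKm
    rw [abs_le] at hMp hMm hKp hKm ⊢
    constructor
    · nlinarith
    · nlinarith
  · -- crude case: ε > δ
    have hSh0 : 0 ≤ Sh := by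
      apply mul_nonneg hninv
      apply Finset.sum_nonneg
      intro i _
      split_ifs <;> norm_num
    have hSt0 : 0 ≤ (n : ℝ)⁻¹ * (∑ i : Fin n,
        if |F (T i) (X i) - b| < v then (1:ℝ) else 0) := by
      apply mul_nonneg hninv
      apply Finset.sum_nonneg
      intro i _
      split_ifs <;> norm_num
    have hSh1 : Sh ≤ 1 := by
      rcases Nat.eq_zero_or_pos n with hn | hn
      · subst hn
        simp [hShdef]
      · have hsum : (∑ i : Fin n, if |Fhat (T i) (X i) - b| < v then (1:ℝ) else 0)
            ≤ (n : ℝ) := by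
          calc (∑ i : Fin n, if |Fhat (T i) (X i) - b| < v then (1:ℝ) else 0)
              ≤ ∑ _i : Fin n, (1:ℝ) := by
                apply Finset.sum_le_sum
                intro i _
                split_ifs <;> norm_num
            _ = (n : ℝ) := by simp
        have hnpos : (0:ℝ) < n := by exact_mod_cast hn
        rw [hShdef]
        calc (n : ℝ)⁻¹ * (∑ i : Fin n, if |Fhat (T i) (X i) - b| < v then (1:ℝ) else 0)
            ≤ (n : ℝ)⁻¹ * (n : ℝ) := mul_le_mul_of_nonneg_left hsum hninv
          _ = 1 := inv_mul_cancel₀ (ne_of_gt hnpos)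
    have hSt1 : (n : ℝ)⁻¹ * (∑ i : Fin n,
        if |F (T i) (X i) - b| < v then (1:ℝ) else 0) ≤ 1 := by
      rcases Nat.eq_zero_or_pos n with hn | hn
      · subst hn
        simp
      · have hsum : (∑ i : Fin n, if |F (T i) (X i) - b| < v then (1:ℝ) else 0)
            ≤ (n : ℝ) := by
          calc (∑ i : Fin n, if |F (T i) (X i) - b| < v then (1:ℝ) else 0)
              ≤ ∑ _i : Fin n, (1:ℝ) := by
                apply Finset.sum_le_sum
                intro i _
                split_ifs <;> norm_num
            _ = (n : ℝ) := by simp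
        have hnpos : (0:ℝ) < n := by exact_mod_cast hn
        calc (n : ℝ)⁻¹ * (∑ i : Fin n, if |F (T i) (X i) - b| < v then (1:ℝ) else 0)
            ≤ (n : ℝ)⁻¹ * (n : ℝ) := mul_le_mul_of_nonneg_left hsum hninv
          _ = 1 := inv_mul_cancel₀ (ne_of_gt hnpos)
    have hMv := hM v
    have hone : 1 < 2 * ε ^ 2 / δ ^ 2 := by
      have hd2 : (0:ℝ) < δ ^ 2 := by positivity
      rw [lt_div_iff₀ hd2]
      nlinarith
    rw [abs_le] at hMv ⊢
    constructor
    · nlinarith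
    · nlinarith
end
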